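/- arXiv:1706.04545 — 7 statements merged into one kernel-verified Lean document; each statement's English description precedes it below -/
import Mathlib

section
/- Let X, Y, Z be topological spaces with Y Hausdorff. Let Γ₁ ⊆ X × Y be a closed subset such that the restriction to Γ₁ of the first projection X × Y → X is a proper map with finite fibers and is surjective onto X, and let Γ₂ ⊆ Y × Z be a closed subset such that the restriction to Γ₂ of the first projection Y × Z → Y is a proper map with finite fibers and is surjective onto Y. Then the composed correspondence Γ₂ ∘ Γ₁ := { (x,z) ∈ X × Z : ∃ y ∈ Y, (x,y) ∈ Γ₁ and (y,z) ∈ Γ₂ } is a closed subset of X × Z, and the restriction to Γ₂ ∘ Γ₁ of the first projection X × Z → X is a proper map with finite fibers and is surjective onto X. -/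
/-!
Let `T ⊆ Γ₁ × Z` be the fibre product of `Γ₁ → Y` and `Γ₂ → Y`. Its projection to `Γ₁` is a base
change of `Γ₂ → Y`, hence again proper with finite fibres and surjective; so is its composite
with `Γ₁ → X`, and these properties descend along the surjection `T → Γ₂ ∘ Γ₁`. Moreover
`Γ₂ ∘ Γ₁` is the image of `T` under `(Γ₁ → X) × id_Z`, which is proper on the closed set `T`.
-/

/-- A subset `Γ` of a product `A × B` is *finite and surjective over `A`* if the restriction
to `Γ` of the first projection `A × B → A` is a proper map, has finite fibers, and is
surjective onto `A`. -/
def FiniteSurjectiveOver {A B : Type*} [TopologicalSpace A] [TopologicalSpace B]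
    (Γ : Set (A × B)) : Prop :=
  IsProperMap (fun p : Γ => (p : A × B).1) ∧
  (∀ a : A, {p : Γ | (p : A × B).1 = a}.Finite) ∧
  Function.Surjective (fun p : Γ => (p : A × B).1)

/-- The composed correspondence `Γ₂ ∘ Γ₁` of `Γ₁ ⊆ X × Y` and `Γ₂ ⊆ Y × Z`. -/
def corComp {X Y Z : Type*} (Γ₁ : Set (X × Y)) (Γ₂ : Set (Y × Z)) : Set (X × Z) :=
  {q : X × Z | ∃ y : Y, (q.1, y) ∈ Γ₁ ∧ (y, q.2) ∈ Γ₂}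

open Filter Topology Function

def IsProperFiniteSurjective {A B : Type*} [TopologicalSpace A] [TopologicalSpace B]
    (f : A → B) : Prop :=
  IsProperMap f ∧ (∀ b, (f ⁻¹' {b}).Finite) ∧ Surjective f

namespace IsProperFiniteSurjective

variable {A B C : Type*} [TopologicalSpace A] [TopologicalSpace B] [TopologicalSpace C]
  {f : A → B} {g : B → C}

theorem comp (hg : IsProperFiniteSurjective g) (hf : IsProperFiniteSurjective f) :
    IsProperFiniteSurjective (g ∘ f) :=
  ⟨hg.1.comp hf.1, fun c => (hg.2.1 c).preimage' fun b _ => hf.2.1 b, hg.2.2.comp hf.2.2⟩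

theorem of_comp_of_surjective (hgf : IsProperFiniteSurjective (g ∘ f)) (hf : Continuous f)
    (hg : Continuous g) (hf_surj : Surjective f) : IsProperFiniteSurjective g := by
  refine ⟨isProperMap_of_comp_of_surj hf hg hgf.1 hf_surj, fun c => ?_, hgf.2.2.of_comp⟩
  rw [← Set.image_preimage_eq (g ⁻¹' {c}) hf_surj]
  exact (hgf.2.1 c).image f

end IsProperFiniteSurjective

section BaseChange

variable {B Y Z : Type*} [TopologicalSpace B] [TopologicalSpace Y] [TopologicalSpace Z]
  {g : B → Y} {Γ : Set (Y × Z)}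

theorem isProperMap_fst_preimage_prodMap (hg : Continuous g)
    (hΓ : IsProperMap fun p : Γ => (p : Y × Z).1) :
    IsProperMap fun p : (Prod.map g id ⁻¹' Γ : Set (B × Z)) => (p : B × Z).1 := by
  refine isProperMap_iff_ultrafilter.2 ⟨by fun_prop, fun 𝒰 b h𝒰 => ?_⟩
  let ψ : (Prod.map g id ⁻¹' Γ : Set (B × Z)) → Γ := fun p => ⟨Prod.map g id p, p.2⟩
  obtain ⟨γ, hγ, hle⟩ := hΓ.ultrafilter_le_nhds_of_tendsto (𝒰 := 𝒰.map ψ) (y := g b)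
    ((hg.tendsto b).comp h𝒰)
  have hz : Tendsto (fun p : (Prod.map g id ⁻¹' Γ : Set (B × Z)) => (p : B × Z).2) 𝒰
      (𝓝 (γ : Y × Z).2) :=
    ((continuous_snd.comp continuous_subtype_val).tendsto γ).comp hle
  refine ⟨⟨(b, (γ : Y × Z).2), by simp [← hγ]⟩, rfl, ?_⟩
  exact tendsto_subtype_rng.2 (h𝒰.prodMk_nhds hz)

theorem IsProperFiniteSurjective.fst_preimage_prodMap (hg : Continuous g)
    (hΓ : IsProperFiniteSurjective fun p : Γ => (p : Y × Z).1) :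
    IsProperFiniteSurjective fun p : (Prod.map g id ⁻¹' Γ : Set (B × Z)) => (p : B × Z).1 := by
  obtain ⟨hΓp, hΓf, hΓs⟩ := hΓ
  refine ⟨isProperMap_fst_preimage_prodMap hg hΓp, fun b => ?_, fun b => ?_⟩
  · let ψ : (Prod.map g id ⁻¹' Γ : Set (B × Z)) → Γ := fun p => ⟨Prod.map g id p, p.2⟩
    refine Set.Finite.of_finite_image (f := ψ) ((hΓf (g b)).subset ?_) ?_
    · rintro _ ⟨p, rfl : (p : B × Z).1 = b, rfl⟩
      rfl
    · rintro ⟨⟨b₁, z₁⟩, h₁⟩ rfl ⟨⟨b₂, z₂⟩, h₂⟩ (rfl : b₂ = b₁) hψ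
      simp_all [ψ]
  · obtain ⟨γ, hγ⟩ := hΓs (g b)
    exact ⟨⟨(b, (γ : Y × Z).2), by simp [← hγ]⟩, rfl⟩

end BaseChange

theorem finiteSurjectiveOver_iff {A B : Type*} [TopologicalSpace A] [TopologicalSpace B]
    {Γ : Set (A × B)} :
    FiniteSurjectiveOver Γ ↔ IsProperFiniteSurjective fun p : Γ => (p : A × B).1 :=
  Iff.rfl

theorem stmt0_general {X Y Z : Type*} [TopologicalSpace X] [TopologicalSpace Y] [TopologicalSpace Z]
    (Γ₁ : Set (X × Y)) (Γ₂ : Set (Y × Z))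
    (h₁ : FiniteSurjectiveOver Γ₁)
    (h₂c : IsClosed Γ₂) (h₂ : FiniteSurjectiveOver Γ₂) :
    IsClosed (corComp Γ₁ Γ₂) ∧ FiniteSurjectiveOver (corComp Γ₁ Γ₂) := by
  let T : Set (Γ₁ × Z) := Prod.map (fun g : Γ₁ => (g : X × Y).2) id ⁻¹' Γ₂
  let φ : T → corComp Γ₁ Γ₂ := fun p =>
    ⟨((p : Γ₁ × Z).1.1.1, (p : Γ₁ × Z).2), (p : Γ₁ × Z).1.1.2, (p : Γ₁ × Z).1.2, p.2⟩
  have hφ_surj : Surjective φ := by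
    rintro ⟨⟨x, z⟩, y, hxy, hyz⟩
    exact ⟨⟨(⟨(x, y), hxy⟩, z), hyz⟩, rfl⟩
  have hφ : IsProperMap (Subtype.val ∘ φ) :=
    (h₁.1.prodMap isProperMap_id).restrict (C := T) (h₂c.preimage (by fun_prop))
  have hT : IsProperFiniteSurjective
      ((fun g : Γ₁ => (g : X × Y).1) ∘ fun p : T => (p : Γ₁ × Z).1) :=
    (finiteSurjectiveOver_iff.1 h₁).comp
      ((finiteSurjectiveOver_iff.1 h₂).fst_preimage_prodMap (by fun_prop))
  constructor
  · simpa only [Set.range_comp, hφ_surj.range_eq, Set.image_univ, Subtype.range_coe] using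
      hφ.isClosed_range
  · exact hT.of_comp_of_surjective (f := φ) (by fun_prop) (by fun_prop) hφ_surj

/-- Composition of finite surjective topological correspondences is closed and finite
surjective, provided the middle space is Hausdorff. -/
theorem stmt0 {X Y Z : Type*} [TopologicalSpace X] [TopologicalSpace Y] [TopologicalSpace Z]
    [T2Space Y] (Γ₁ : Set (X × Y)) (Γ₂ : Set (Y × Z))
    (h₁c : IsClosed Γ₁) (h₁ : FiniteSurjectiveOver Γ₁)
    (h₂c : IsClosed Γ₂) (h₂ : FiniteSurjectiveOver Γ₂) :
    IsClosed (corComp Γ₁ Γ₂) ∧ FiniteSurjectiveOver (corComp Γ₁ Γ₂) :=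
  stmt0_general Γ₁ Γ₂ h₁ h₂c h₂
end

section
/- Let X, Y, Z be topological spaces with Y Hausdorff. Let Γ₁ ⊆ X × Y be a closed subset, and let Γ₂ ⊆ Y × Z be a closed subset such that the restriction to Γ₂ of the first projection Y × Z → Y is a proper map with finite fibers and is surjective onto Y. Then the fiber product Γ₁ ×_Y Γ₂ := { (x,y,z) ∈ X × Y × Z : (x,y) ∈ Γ₁ and (y,z) ∈ Γ₂ } is a closed subset of X × Y × Z, and the projection Γ₁ ×_Y Γ₂ → Γ₁, (x,y,z) ↦ (x,y), is a proper map with finite fibers and is surjective onto Γ₁. -/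
/-- The fiber product `Γ₁ ×_Y Γ₂ ⊆ X × Y × Z` of `Γ₁ ⊆ X × Y` and `Γ₂ ⊆ Y × Z`. -/
def fiberProd {X Y Z : Type*} (Γ₁ : Set (X × Y)) (Γ₂ : Set (Y × Z)) : Set (X × Y × Z) :=
  {t : X × Y × Z | (t.1, t.2.1) ∈ Γ₁ ∧ (t.2.1, t.2.2) ∈ Γ₂}

/-- The projection `Γ₁ ×_Y Γ₂ → Γ₁`, `(x,y,z) ↦ (x,y)`. -/
def fpProj {X Y Z : Type*} (Γ₁ : Set (X × Y)) (Γ₂ : Set (Y × Z))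
    (t : fiberProd Γ₁ Γ₂) : Γ₁ :=
  ⟨((t : X × Y × Z).1, (t : X × Y × Z).2.1), t.2.1⟩

/-!
The projection `Γ₁ ×_Y Γ₂ → Γ₁` is the base change of `Γ₂ → Y` along `Γ₁ → Y`, `(x, y) ↦ y`,
and properness, finiteness of fibers and surjectivity are all stable under base change: for
properness, an ultrafilter on the fiber product converging in `Γ₁` pushes forward to one on `Γ₂`
whose image in `Y` converges, so it converges in `Γ₂` and the two limits glue.
-/

open Filter Topology

section Pullback

variable {P A B C : Type*} {f : A → C} {g : B → C} {e : P → B × A}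

theorem IsProperMap.fst_comp_of_isPullback [TopologicalSpace P] [TopologicalSpace A]
    [TopologicalSpace B] [TopologicalSpace C] (hf : IsProperMap f) (hg : Continuous g)
    (he : IsInducing e) (hcomm : ∀ p, g (e p).1 = f (e p).2)
    (hlift : ∀ b a, g b = f a → ∃ p, e p = (b, a)) : IsProperMap (Prod.fst ∘ e) := by
  refine isProperMap_iff_ultrafilter.mpr ⟨continuous_fst.comp he.continuous, ?_⟩
  intro 𝒰 b hb
  have hfa : Tendsto (f ∘ Prod.snd ∘ e) 𝒰 (𝓝 (g b)) := by
    simpa only [Function.comp_def, ← hcomm] using (hg.tendsto b).comp hb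
  obtain ⟨a, hab, ha⟩ := hf.ultrafilter_le_nhds_of_tendsto (𝒰 := 𝒰.map (Prod.snd ∘ e)) hfa
  obtain ⟨p, hp⟩ := hlift b a hab.symm
  refine ⟨p, by simp [hp], ?_⟩
  rw [he.nhds_eq_comap, hp, ← map_le_iff_le_comap, nhds_prod_eq]
  exact hb.prodMk ha

theorem finite_preimage_fst_comp_of_isPullback (he : Function.Injective e)
    (hcomm : ∀ p, g (e p).1 = f (e p).2) (hf : ∀ c, (f ⁻¹' {c}).Finite) (b : B) :
    ((Prod.fst ∘ e) ⁻¹' {b}).Finite := by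
  refine (((Set.finite_singleton b).prod (hf (g b))).preimage he.injOn).subset ?_
  intro p (hp : (e p).1 = b)
  exact ⟨hp, by simp [← hcomm, hp]⟩

theorem surjective_fst_comp_of_isPullback (hf : Function.Surjective f)
    (hlift : ∀ b a, g b = f a → ∃ p, e p = (b, a)) : Function.Surjective (Prod.fst ∘ e) := by
  intro b
  obtain ⟨a, ha⟩ := hf (g b)
  obtain ⟨p, hp⟩ := hlift b a ha.symm
  exact ⟨p, by simp [hp]⟩

end Pullback

section FiberProd

variable {X Y Z : Type*} {Γ₁ : Set (X × Y)} {Γ₂ : Set (Y × Z)}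

theorem isClosed_fiberProd [TopologicalSpace X] [TopologicalSpace Y] [TopologicalSpace Z]
    (h₁ : IsClosed Γ₁) (h₂ : IsClosed Γ₂) : IsClosed (fiberProd Γ₁ Γ₂) :=
  (h₁.preimage (by fun_prop : Continuous fun t : X × Y × Z => (t.1, t.2.1))).inter
    (h₂.preimage continuous_snd)

variable (Γ₁ Γ₂) in
def fiberProdToProd (t : fiberProd Γ₁ Γ₂) : Γ₁ × Γ₂ :=
  (fpProj Γ₁ Γ₂ t, ⟨(t.1.2.1, t.1.2.2), t.2.2⟩)

theorem isEmbedding_fiberProdToProd [TopologicalSpace X] [TopologicalSpace Y]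
    [TopologicalSpace Z] : IsEmbedding (fiberProdToProd Γ₁ Γ₂) := by
  let forget : Γ₁ × Γ₂ → X × Y × Z := fun q => (q.1.1.1, q.1.1.2, q.2.1.2)
  have hforget : forget ∘ fiberProdToProd Γ₁ Γ₂ = Subtype.val := rfl
  have hcont : Continuous (fiberProdToProd Γ₁ Γ₂) :=
    (continuous_subtype_val.fst.prodMk continuous_subtype_val.snd.fst).subtype_mk _ |>.prodMk
      ((continuous_subtype_val.snd.fst.prodMk continuous_subtype_val.snd.snd).subtype_mk _)
  exact IsEmbedding.of_comp hcont (by fun_prop) (hforget ▸ IsEmbedding.subtypeVal)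

theorem exists_fiberProdToProd_eq (g₁ : Γ₁) (g₂ : Γ₂) (h : g₁.1.2 = g₂.1.1) :
    ∃ t, fiberProdToProd Γ₁ Γ₂ t = (g₁, g₂) := by
  obtain ⟨⟨x, y⟩, hxy⟩ := g₁
  obtain ⟨⟨y', z⟩, hyz⟩ := g₂
  obtain rfl : y = y' := h
  exact ⟨⟨(x, y, z), hxy, hyz⟩, rfl⟩

end FiberProd

theorem stmt1_general {X Y Z : Type*} [TopologicalSpace X] [TopologicalSpace Y] [TopologicalSpace Z]
    (Γ₁ : Set (X × Y)) (Γ₂ : Set (Y × Z))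
    (h₁c : IsClosed Γ₁) (h₂c : IsClosed Γ₂) (h₂ : FiniteSurjectiveOver Γ₂) :
    IsClosed (fiberProd Γ₁ Γ₂) ∧
    IsProperMap (fpProj Γ₁ Γ₂) ∧
    (∀ g : Γ₁, {t : fiberProd Γ₁ Γ₂ | fpProj Γ₁ Γ₂ t = g}.Finite) ∧
    Function.Surjective (fpProj Γ₁ Γ₂) := by
  obtain ⟨h₂p, h₂f, h₂s⟩ := h₂
  have hcomm : ∀ t, (fiberProdToProd Γ₁ Γ₂ t).1.1.2 = (fiberProdToProd Γ₁ Γ₂ t).2.1.1 :=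
    fun _ => rfl
  have hlift := fun g₁ g₂ h => exists_fiberProdToProd_eq (Γ₁ := Γ₁) (Γ₂ := Γ₂) g₁ g₂ h
  exact ⟨isClosed_fiberProd h₁c h₂c,
    h₂p.fst_comp_of_isPullback continuous_subtype_val.snd isEmbedding_fiberProdToProd.isInducing hcomm hlift,
    finite_preimage_fst_comp_of_isPullback (g := fun g₁ : Γ₁ => g₁.1.2)
      isEmbedding_fiberProdToProd.injective hcomm h₂f,
    surjective_fst_comp_of_isPullback h₂s hlift⟩

theorem stmt1 {X Y Z : Type*} [TopologicalSpace X] [TopologicalSpace Y] [TopologicalSpace Z]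
    [T2Space Y] (Γ₁ : Set (X × Y)) (Γ₂ : Set (Y × Z))
    (h₁c : IsClosed Γ₁) (h₂c : IsClosed Γ₂) (h₂ : FiniteSurjectiveOver Γ₂) :
    IsClosed (fiberProd Γ₁ Γ₂) ∧
    IsProperMap (fpProj Γ₁ Γ₂) ∧
    (∀ g : Γ₁, {t : fiberProd Γ₁ Γ₂ | fpProj Γ₁ Γ₂ t = g}.Finite) ∧
    Function.Surjective (fpProj Γ₁ Γ₂) :=
  stmt1_general Γ₁ Γ₂ h₁c h₂c h₂
end

section
/- Let S, X, Y, Z be topological spaces together with continuous maps h_X : X → S, h_Y : Y → S, h_Z : Z → S, and assume Y is Hausdorff. Write X ×_S Y = { (x,y) ∈ X × Y : h_X(x) = h_Y(y) } with the subspace topology, and similarly Y ×_S Z and X ×_S Z. Let Γ₁ ⊆ X ×_S Y be closed in X ×_S Y and finite and surjective over X, and let Γ₂ ⊆ Y ×_S Z be closed in Y ×_S Z and finite and surjective over Y. Then Γ₂ ∘ Γ₁ := { (x,z) : ∃ y ∈ Y, (x,y) ∈ Γ₁ and (y,z) ∈ Γ₂ } is contained in X ×_S Z, is closed in X ×_S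 Z, and is finite and surjective over X. -/
/-! A point `(x, z)` of the composite comes with a middle point `y`, chosen once and for all.
If an ultrafilter on the composite has first coordinates tending to `a`, properness of `Γ₁ → X`
makes the chosen `y`s tend to some `b` with `(a, b) ∈ Γ₁`, and properness of `Γ₂ → Y` then makes
the `z`s tend to some `c` with `(b, c) ∈ Γ₂`; this is properness of the composite. If instead the
`z`s tend to a given `c` with `(a, c)` lying over `S`, then `(b, c)` lies over `S` and is a limit
of points of `Γ₂`, so it belongs to `Γ₂` by closedness; this is closedness in `X ×_S Z`. Finite
fibres and surjectivity are set-theoretic. -/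

open Filter Topology Set

section Correspondence

variable {A B : Type*}

lemma finite_fiber_fst_iff (Γ : Set (A × B)) (a : A) :
    {p : Γ | (p : A × B).1 = a}.Finite ↔ {b | (a, b) ∈ Γ}.Finite := by
  have himage : Subtype.val '' {p : Γ | (p : A × B).1 = a} = Prod.mk a '' {b | (a, b) ∈ Γ} := by
    ext ⟨a', b⟩
    constructor
    · rintro ⟨⟨_, hp⟩, rfl, rfl⟩
      exact ⟨b, hp, rfl⟩
    · rintro ⟨b, hb, ⟨⟩⟩
      exact ⟨⟨_, hb⟩, rfl, rfl⟩
  rw [← finite_image_iff Subtype.val_injective.injOn, himage,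
    finite_image_iff (Prod.mk_right_injective a).injOn]

variable [TopologicalSpace A] [TopologicalSpace B]

lemma exists_mem_tendsto_of_isProperMap_fst {Γ : Set (A × B)}
    (hΓ : IsProperMap (fun p : Γ => (p : A × B).1)) {α : Type*} {𝒰 : Ultrafilter α}
    {f : α → A} {g : α → B} (hfg : ∀ i, (f i, g i) ∈ Γ) {a : A} (hf : Tendsto f 𝒰 (𝓝 a)) :
    ∃ b, (a, b) ∈ Γ ∧ Tendsto g 𝒰 (𝓝 b) := by
  let k : α → Γ := fun i => ⟨(f i, g i), hfg i⟩
  obtain ⟨p, rfl, hp⟩ := hΓ.ultrafilter_le_nhds_of_tendsto (𝒰 := 𝒰.map k) hf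
  refine ⟨(p : A × B).2, p.2, ?_⟩
  exact (continuous_snd.comp continuous_subtype_val).tendsto p |>.comp hp

end Correspondence

section Composition

variable {X Y Z : Type*} {Γ₁ : Set (X × Y)} {Γ₂ : Set (Y × Z)}

lemma corComp_subset {S : Type*} {hX : X → S} {hY : Y → S} {hZ : Z → S}
    (h₁sub : Γ₁ ⊆ {p : X × Y | hX p.1 = hY p.2}) (h₂sub : Γ₂ ⊆ {p : Y × Z | hY p.1 = hZ p.2}) :
    corComp Γ₁ Γ₂ ⊆ {q : X × Z | hX q.1 = hZ q.2} :=
  fun _ ⟨_, hxy, hyz⟩ => (h₁sub hxy).trans (h₂sub hyz)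

lemma finite_setOf_mem_corComp {x : X} (h₁ : {y | (x, y) ∈ Γ₁}.Finite)
    (h₂ : ∀ y, {z | (y, z) ∈ Γ₂}.Finite) : {z | (x, z) ∈ corComp Γ₁ Γ₂}.Finite := by
  have hunion : {z | (x, z) ∈ corComp Γ₁ Γ₂} = ⋃ y ∈ {y | (x, y) ∈ Γ₁}, {z | (y, z) ∈ Γ₂} := by
    ext z
    simp [corComp]
  rw [hunion]
  exact h₁.biUnion fun y _ => h₂ y

lemma surjective_fst_corComp (h₁ : Function.Surjective (fun p : Γ₁ => (p : X × Y).1))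
    (h₂ : Function.Surjective (fun p : Γ₂ => (p : Y × Z).1)) :
    Function.Surjective (fun q : corComp Γ₁ Γ₂ => (q : X × Z).1) := by
  intro x
  obtain ⟨⟨⟨x, y⟩, hxy⟩, rfl⟩ := h₁ x
  obtain ⟨⟨⟨y, z⟩, hyz⟩, rfl⟩ := h₂ y
  exact ⟨⟨(x, z), y, hxy, hyz⟩, rfl⟩

variable [TopologicalSpace X] [TopologicalSpace Y] [TopologicalSpace Z]

lemma isProperMap_fst_corComp (h₁ : IsProperMap (fun p : Γ₁ => (p : X × Y).1))
    (h₂ : IsProperMap (fun p : Γ₂ => (p : Y × Z).1)) :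
    IsProperMap (fun q : corComp Γ₁ Γ₂ => (q : X × Z).1) := by
  refine isProperMap_iff_ultrafilter.mpr
    ⟨continuous_fst.comp continuous_subtype_val, fun 𝒰 x hx => ?_⟩
  choose y hy₁ hy₂ using fun q : corComp Γ₁ Γ₂ => (q.2 : ∃ y, _ ∧ _)
  obtain ⟨b, hxb, hb⟩ := exists_mem_tendsto_of_isProperMap_fst h₁ hy₁ hx
  obtain ⟨c, hbc, hc⟩ := exists_mem_tendsto_of_isProperMap_fst h₂ hy₂ hb
  exact ⟨⟨(x, c), b, hxb, hbc⟩, rfl, tendsto_subtype_rng.mpr (hx.prodMk_nhds hc)⟩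

lemma isClosed_preimage_val_corComp {S : Type*} {hX : X → S} {hY : Y → S} {hZ : Z → S}
    (h₁ : IsProperMap (fun p : Γ₁ => (p : X × Y).1))
    (h₁sub : Γ₁ ⊆ {p : X × Y | hX p.1 = hY p.2}) (h₂sub : Γ₂ ⊆ {p : Y × Z | hY p.1 = hZ p.2})
    (h₂c : IsClosed (Subtype.val ⁻¹' Γ₂ : Set {p : Y × Z // hY p.1 = hZ p.2})) :
    IsClosed (Subtype.val ⁻¹' corComp Γ₁ Γ₂ : Set {q : X × Z // hX q.1 = hZ q.2}) := by
  refine isClosed_preimage_val.mpr ?_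
  rintro ⟨x, z⟩ ⟨hxz, hcl⟩
  have : (comap Subtype.val (𝓝 (x, z)) : Filter (corComp Γ₁ Γ₂)).NeBot :=
    mem_closure_iff_comap_neBot.mp (closure_mono inter_subset_right hcl)
  obtain ⟨𝒰, h𝒰⟩ := (comap Subtype.val (𝓝 (x, z)) : Filter (corComp Γ₁ Γ₂)).exists_ultrafilter_le
  have hval : Tendsto (Subtype.val : corComp Γ₁ Γ₂ → X × Z) 𝒰 (𝓝 (x, z)) :=
    tendsto_comap.mono_left h𝒰
  choose y hy₁ hy₂ using fun q : corComp Γ₁ Γ₂ => (q.2 : ∃ y, _ ∧ _)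
  obtain ⟨b, hxb, hb⟩ :=
    exists_mem_tendsto_of_isProperMap_fst h₁ hy₁ ((continuous_fst.tendsto _).comp hval)
  have hbz : (b, z) ∈ closure Γ₂ :=
    mem_closure_of_tendsto (hb.prodMk_nhds ((continuous_snd.tendsto _).comp hval))
      (Eventually.of_forall hy₂)
  exact ⟨b, hxb, isClosed_preimage_val.mp h₂c
    ⟨(h₁sub hxb).symm.trans hxz, closure_mono (subset_inter h₂sub subset_rfl) hbz⟩⟩

theorem FiniteSurjectiveOver.corComp (h₁ : FiniteSurjectiveOver Γ₁)
    (h₂ : FiniteSurjectiveOver Γ₂) : FiniteSurjectiveOver (corComp Γ₁ Γ₂) := by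
  obtain ⟨h₁p, h₁f, h₁s⟩ := h₁
  obtain ⟨h₂p, h₂f, h₂s⟩ := h₂
  refine ⟨isProperMap_fst_corComp h₁p h₂p, fun x => ?_, surjective_fst_corComp h₁s h₂s⟩
  simp only [finite_fiber_fst_iff] at h₁f h₂f ⊢
  exact finite_setOf_mem_corComp (h₁f x) h₂f

end Composition

theorem stmt3_general {S X Y Z : Type*} [TopologicalSpace X]
    [TopologicalSpace Y] [TopologicalSpace Z]
    (hX : X → S) (hY : Y → S) (hZ : Z → S)
    (Γ₁ : Set (X × Y)) (Γ₂ : Set (Y × Z))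
    (h₁sub : Γ₁ ⊆ {p : X × Y | hX p.1 = hY p.2})
    (h₂sub : Γ₂ ⊆ {p : Y × Z | hY p.1 = hZ p.2})
    (h₂c : IsClosed (Subtype.val ⁻¹' Γ₂ : Set {p : Y × Z // hY p.1 = hZ p.2}))
    (h₁ : FiniteSurjectiveOver Γ₁) (h₂ : FiniteSurjectiveOver Γ₂) :
    corComp Γ₁ Γ₂ ⊆ {q : X × Z | hX q.1 = hZ q.2} ∧
    IsClosed (Subtype.val ⁻¹' corComp Γ₁ Γ₂ : Set {q : X × Z // hX q.1 = hZ q.2}) ∧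
    FiniteSurjectiveOver (corComp Γ₁ Γ₂) :=
  ⟨corComp_subset h₁sub h₂sub, isClosed_preimage_val_corComp h₁.1 h₁sub h₂sub h₂c, h₁.corComp h₂⟩

/-- Relative composition law: for spaces `X, Y, Z` over `S` with `Y` Hausdorff, the
composition of a finite surjective correspondence `Γ₁`, closed in `X ×_S Y`, with a finite
surjective correspondence `Γ₂`, closed in `Y ×_S Z`, is contained and closed in `X ×_S Z`
and is finite and surjective over `X`. -/
theorem stmt3 {S X Y Z : Type*} [TopologicalSpace S] [TopologicalSpace X]
    [TopologicalSpace Y] [TopologicalSpace Z] [T2Space Y]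
    (hX : X → S) (hY : Y → S) (hZ : Z → S)
    (hXc : Continuous hX) (hYc : Continuous hY) (hZc : Continuous hZ)
    (Γ₁ : Set (X × Y)) (Γ₂ : Set (Y × Z))
    (h₁sub : Γ₁ ⊆ {p : X × Y | hX p.1 = hY p.2})
    (h₂sub : Γ₂ ⊆ {p : Y × Z | hY p.1 = hZ p.2})
    (h₁c : IsClosed (Subtype.val ⁻¹' Γ₁ : Set {p : X × Y // hX p.1 = hY p.2}))
    (h₂c : IsClosed (Subtype.val ⁻¹' Γ₂ : Set {p : Y × Z // hY p.1 = hZ p.2}))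
    (h₁ : FiniteSurjectiveOver Γ₁) (h₂ : FiniteSurjectiveOver Γ₂) :
    corComp Γ₁ Γ₂ ⊆ {q : X × Z | hX q.1 = hZ q.2} ∧
    IsClosed (Subtype.val ⁻¹' corComp Γ₁ Γ₂ : Set {q : X × Z // hX q.1 = hZ q.2}) ∧
    FiniteSurjectiveOver (corComp Γ₁ Γ₂) :=
  stmt3_general hX hY hZ Γ₁ Γ₂ h₁sub h₂sub h₂c h₁ h₂
end

section
/- Let E be a finite-dimensional real vector space and K a simplicial complex in E (in the sense of Mathlib's Geometry.SimplicialComplex) with countably many faces which is locally finite, meaning that every point of its underlying space |K| (the union of the convex hulls of its faces, with the subspace topology from E) has a neighborhood in |K| meeting only finitely many faces. Then there exists a sequence (U_n)_{n∈ℕ} of open subsets of |K| covering |K| such that for every nonempty finite subset I ⊆ ℕ, the intersection ⋂_{i∈I} U_i is either empty or a contractible topological space. -/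
/-!
Cover `|K|` by the open stars of the vertices; these are open because the complement of an open
star is a locally finite union of closed simplices. A finite intersection of open stars is nonempty
only if the vertices span a face `σ`, and it is then star-convex about the barycentre of `σ`:
barycentric coordinates in a simplex are unique, so a point lies in the open star of `v` exactly
when its coordinate at `v` is positive, and moving towards the barycentre keeps the coordinates
at the vertices of `σ` positive.
-/

open Set Finset Topology

section AffineIndependent

variable {R E : Type*} [Field R] [LinearOrder R] [IsStrictOrderedRing R]
  [AddCommGroup E] [Module R E]

lemma AffineIndependent.eq_zero_of_sum_smul_mem_convexHull {t t' : Finset E}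
    (ht : AffineIndependent R ((↑) : t → E)) (ht' : t' ⊆ t) {w : E → R}
    (hw : ∑ y ∈ t, w y = 1) (hz : ∑ y ∈ t, w y • y ∈ convexHull R (t' : Set E))
    {v : E} (hv : v ∈ t) (hvt' : v ∉ t') : w v = 0 := by
  classical
  obtain ⟨w', -, hw'₁, hw'z⟩ := Finset.mem_convexHull'.1 hz
  have htt' : t ∩ t' = t' := Finset.inter_eq_right.2 ht'
  have := ht.eq_of_sum_eq_sum_subtype (w₁ := w) (w₂ := fun y ↦ if y ∈ t' then w' y else 0)
    (by rw [Finset.sum_ite_mem, htt', hw'₁, hw])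
    (by simp only [ite_smul, zero_smul]; rw [Finset.sum_ite_mem, htt', hw'z]) v hv
  rwa [if_neg hvt'] at this

end AffineIndependent

namespace Geometry.SimplicialComplex

variable {E : Type*} [NormedAddCommGroup E] [NormedSpace ℝ E] {K : SimplicialComplex ℝ E}

lemma mem_of_sum_smul_mem_convexHull {t u : Finset E} (ht : t ∈ K.faces) (hu : u ∈ K.faces)
    {w : E → ℝ} (hw₀ : ∀ y ∈ t, 0 ≤ w y) (hw₁ : ∑ y ∈ t, w y = 1)
    (hz : ∑ y ∈ t, w y • y ∈ convexHull ℝ (u : Set E)) {v : E} (hv : v ∈ t) (hwv : w v ≠ 0) :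
    v ∈ u := by
  classical
  by_contra hvu
  have hzt : ∑ y ∈ t, w y • y ∈ convexHull ℝ (t : Set E) :=
    Finset.mem_convexHull'.2 ⟨w, hw₀, hw₁, rfl⟩
  have hztu : ∑ y ∈ t, w y • y ∈ convexHull ℝ ((t ∩ u : Finset E) : Set E) := by
    rw [Finset.coe_inter]; exact K.inter_subset_convexHull ht hu ⟨hzt, hz⟩
  exact hwv <| (K.indep ht).eq_zero_of_sum_smul_mem_convexHull Finset.inter_subset_left hw₁ hztu
    hv fun h ↦ hvu (Finset.mem_inter.1 h).2

lemma exists_minimal_face {x : E} (hx : x ∈ K.space) :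
    ∃ s ∈ K.faces, x ∈ convexHull ℝ (s : Set E) ∧
      ∀ t ∈ K.faces, x ∈ convexHull ℝ (t : Set E) → s ⊆ t := by
  classical
  obtain ⟨s, ⟨hs, hxs⟩, hmin⟩ := exists_minimal_of_wellFoundedLT
    (fun s : Finset E ↦ s ∈ K.faces ∧ x ∈ convexHull ℝ (s : Set E)) (mem_space_iff.1 hx)
  refine ⟨s, hs, hxs, fun t ht hxt ↦ ?_⟩
  have hxst : x ∈ convexHull ℝ ((s ∩ t : Finset E) : Set E) := by
    rw [Finset.coe_inter]; exact K.inter_subset_convexHull hs ht ⟨hxs, hxt⟩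
  have hst : (s ∩ t).Nonempty := Finset.coe_nonempty.1 (convexHull_nonempty_iff.1 ⟨x, hxst⟩)
  exact (hmin ⟨K.down_closed hs Finset.inter_subset_left hst, hxst⟩
    Finset.inter_subset_left).trans Finset.inter_subset_right

def openStar (K : SimplicialComplex ℝ E) (v : E) : Set E :=
  {x ∈ K.space | ∀ t ∈ K.faces, x ∈ convexHull ℝ (t : Set E) → v ∈ t}

lemma openStar_subset_space {v : E} : K.openStar v ⊆ K.space := fun _ hx ↦ hx.1

lemma sum_smul_mem_openStar {t : Finset E} (ht : t ∈ K.faces) {w : E → ℝ}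
    (hw₀ : ∀ y ∈ t, 0 ≤ w y) (hw₁ : ∑ y ∈ t, w y = 1) {v : E} (hv : v ∈ t) (hwv : 0 < w v) :
    ∑ y ∈ t, w y • y ∈ K.openStar v :=
  ⟨convexHull_subset_space ht (Finset.mem_convexHull'.2 ⟨w, hw₀, hw₁, rfl⟩),
    fun _ hu hz ↦ mem_of_sum_smul_mem_convexHull ht hu hw₀ hw₁ hz hv hwv.ne'⟩

lemma exists_mem_openStar {x : E} (hx : x ∈ K.space) : ∃ v ∈ K.vertices, x ∈ K.openStar v := by
  obtain ⟨s, hs, hxs, hmin⟩ := exists_minimal_face hx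
  obtain ⟨v, hv⟩ := nonempty_of_mem_faces hs
  exact ⟨v, by rw [vertices_eq]; exact mem_biUnion hs hv, hx, fun t ht hxt ↦ hmin t ht hxt hv⟩

lemma isOpen_preimage_openStar
    (hK : ∀ x : K.space, ∃ V : Set K.space, IsOpen V ∧ x ∈ V ∧
      {s ∈ K.faces | ∃ y ∈ V, (y : E) ∈ convexHull ℝ (s : Set E)}.Finite)
    (v : E) : IsOpen ((↑) ⁻¹' K.openStar v : Set K.space) := by
  have hcompl : ((↑) ⁻¹' K.openStar v : Set K.space) =
      (⋃ t : {t // t ∈ K.faces ∧ v ∉ t}, (↑) ⁻¹' convexHull ℝ ((t : Finset E) : Set E))ᶜ := by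
    ext x
    simp only [openStar, Set.mem_preimage, mem_compl_iff, mem_iUnion, Subtype.exists, not_exists]
    exact ⟨fun hx t ht hxt ↦ ht.2 (hx.2 t ht.1 hxt),
      fun hx ↦ ⟨x.2, fun t ht hxt ↦ by_contra fun hvt ↦ hx t ⟨ht, hvt⟩ hxt⟩⟩
  rw [hcompl, isOpen_compl_iff]
  refine LocallyFinite.isClosed_iUnion (fun x ↦ ?_) fun t ↦
    ((t.1.finite_toSet.isCompact_convexHull ℝ).isClosed).preimage continuous_subtype_val
  obtain ⟨V, hV, hxV, hfin⟩ := hK x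
  refine ⟨V, hV.mem_nhds hxV, (hfin.preimage Subtype.val_injective.injOn).subset ?_⟩
  rintro t ⟨y, hyt, hyV⟩
  exact ⟨t.2.1, y, hyV, hyt⟩

lemma starConvex_iInter_openStar {σ : Finset E} (hσ : σ ∈ K.faces) :
    StarConvex ℝ (∑ y ∈ σ, (#σ : ℝ)⁻¹ • y) (⋂ v ∈ σ, K.openStar v) := by
  classical
  intro x hx a c ha hc hac
  rcases ha.eq_or_lt with rfl | ha
  · simpa [show c = 1 by linarith] using hx
  obtain ⟨v₀, hv₀⟩ := nonempty_of_mem_faces hσ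
  obtain ⟨t, ht, hxt⟩ := mem_space_iff.1 (mem_iInter₂.1 hx v₀ hv₀).1
  have hσt : σ ⊆ t := fun v hv ↦ (mem_iInter₂.1 hx v hv).2 t ht hxt
  obtain ⟨w, hw₀, hw₁, rfl⟩ := Finset.mem_convexHull'.1 hxt
  have hσ₀ : (0 : ℝ) < #σ := by exact_mod_cast Finset.card_pos.2 ⟨v₀, hv₀⟩
  set β : E → ℝ := fun y ↦ if y ∈ σ then (#σ : ℝ)⁻¹ else 0
  have htσ : t ∩ σ = σ := Finset.inter_eq_right.2 hσt
  have hβ₁ : ∑ y ∈ t, β y = 1 := by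
    simp only [β, Finset.sum_ite_mem, htσ, Finset.sum_const, nsmul_eq_mul]
    exact mul_inv_cancel₀ hσ₀.ne'
  have hβ : ∑ y ∈ t, β y • y = ∑ y ∈ σ, (#σ : ℝ)⁻¹ • y := by
    simp only [β, ite_smul, zero_smul, Finset.sum_ite_mem, htσ]
  have hcomb : a • ∑ y ∈ σ, (#σ : ℝ)⁻¹ • y + c • ∑ y ∈ t, w y • y
      = ∑ y ∈ t, (a * β y + c * w y) • y := by
    simp only [← hβ, Finset.smul_sum, ← Finset.sum_add_distrib, add_smul, mul_smul]
  rw [hcomb]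
  refine mem_iInter₂.2 fun v hv ↦ sum_smul_mem_openStar ht
    (fun y hy ↦ add_nonneg (mul_nonneg ha.le (by simp only [β]; split_ifs <;> positivity))
      (mul_nonneg hc (hw₀ y hy))) ?_ (hσt hv) ?_
  · rw [Finset.sum_add_distrib, ← Finset.mul_sum, ← Finset.mul_sum, hβ₁, hw₁, mul_one, mul_one, hac]
  · simp only [β, if_pos hv]
    exact add_pos_of_pos_of_nonneg (by positivity) (mul_nonneg hc (hw₀ v (hσt hv)))

lemma contractibleSpace_iInter_openStar {σ : Finset E} (hσ : σ.Nonempty)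
    (hne : (⋂ v ∈ σ, K.openStar v).Nonempty) : ContractibleSpace ↥(⋂ v ∈ σ, K.openStar v) := by
  obtain ⟨x, hx⟩ := hne
  obtain ⟨v, hv⟩ := hσ
  obtain ⟨t, ht, hxt⟩ := mem_space_iff.1 (mem_iInter₂.1 hx v hv).1
  have hσt : σ ⊆ t := fun u hu ↦ (mem_iInter₂.1 hx u hu).2 t ht hxt
  exact (starConvex_iInter_openStar (K.down_closed ht hσt ⟨v, hv⟩)).contractibleSpace ⟨x, hx⟩

lemma vertices_countable (hK : K.faces.Countable) : K.vertices.Countable := by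
  rw [vertices_eq]
  exact hK.biUnion fun s _ ↦ s.finite_toSet.countable

end Geometry.SimplicialComplex

open Geometry.SimplicialComplex

theorem stmt6_general {E : Type*} [NormedAddCommGroup E] [NormedSpace ℝ E]
    (K : Geometry.SimplicialComplex ℝ E)
    (hcount : K.faces.Countable)
    (hlocfin : ∀ x : K.space, ∃ V : Set K.space, IsOpen V ∧ x ∈ V ∧
      {s ∈ K.faces | ∃ y ∈ V, (y : E) ∈ convexHull ℝ (s : Set E)}.Finite) :
    ∃ U : ℕ → Set K.space, (∀ n, IsOpen (U n)) ∧ (⋃ n, U n) = Set.univ ∧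
      ∀ I : Finset ℕ, I.Nonempty →
        (⋂ i ∈ I, U i) = ∅ ∨ ContractibleSpace ↥(⋂ i ∈ I, U i) := by
  classical
  obtain ⟨f, hf⟩ := Set.countable_iff_exists_subset_range.1 (vertices_countable hcount)
  refine ⟨fun n ↦ (↑) ⁻¹' K.openStar (f n), fun n ↦ isOpen_preimage_openStar hlocfin (f n),
    eq_univ_of_forall fun x ↦ ?_, fun I hI ↦ ?_⟩
  · obtain ⟨v, hv, hxv⟩ := exists_mem_openStar x.2
    obtain ⟨n, rfl⟩ := hf hv
    exact mem_iUnion.2 ⟨n, hxv⟩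
  · have hpre : ⋂ i ∈ I, ((↑) ⁻¹' K.openStar (f i) : Set K.space)
        = (↑) ⁻¹' ⋂ v ∈ I.image f, K.openStar v := by
      simp only [preimage_iInter₂, Finset.set_biInter_finset_image]
    rw [hpre]
    rcases (⋂ v ∈ I.image f, K.openStar v).eq_empty_or_nonempty with h | h
    · exact Or.inl (by rw [h, Set.preimage_empty])
    · obtain ⟨i, hi⟩ := hI
      have hspace : ⋂ v ∈ I.image f, K.openStar v ⊆ range ((↑) : K.space → E) := by
        rw [Subtype.range_coe]
        exact (biInter_subset_of_mem (Finset.mem_image_of_mem f hi)).trans openStar_subset_space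
      exact Or.inr ((IsEmbedding.subtypeVal.homeomorphOfSubsetRange hspace).contractibleSpace_iff.2
        (contractibleSpace_iInter_openStar ⟨f i, Finset.mem_image_of_mem f hi⟩ h))

/-- A countable locally finite simplicial complex in a finite-dimensional real vector space
admits a countable open covering of its underlying space all of whose nonempty finite
intersections are empty or contractible. -/
theorem stmt6 {E : Type*} [NormedAddCommGroup E] [NormedSpace ℝ E] [FiniteDimensional ℝ E]
    (K : Geometry.SimplicialComplex ℝ E)
    (hcount : K.faces.Countable)
    (hlocfin : ∀ x : K.space, ∃ V : Set K.space, IsOpen V ∧ x ∈ V ∧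
      {s ∈ K.faces | ∃ y ∈ V, (y : E) ∈ convexHull ℝ (s : Set E)}.Finite) :
    ∃ U : ℕ → Set K.space, (∀ n, IsOpen (U n)) ∧ (⋃ n, U n) = Set.univ ∧
      ∀ I : Finset ℕ, I.Nonempty →
        (⋂ i ∈ I, U i) = ∅ ∨ ContractibleSpace ↥(⋂ i ∈ I, U i) :=
  stmt6_general K hcount hlocfin
end

section
/- Let F be a presheaf of abelian groups on the category of topological spaces (a contravariant functor from Top to abelian groups). Let X, Y be topological spaces and f₀, f₁ : X → Y continuous maps. If f₀ and f₁ are homotopic, then the chain maps sing_𝕀F(f₀) and sing_𝕀F(f₁) from sing_𝕀F(Y) to sing_𝕀F(X), given in degree n by F(f₀ × id_{[0,1]ⁿ}) and F(f₁ × id_{[0,1]ⁿ}) respectively, induce the same map on homology in every degree. -/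
/-!
Let `H : I × X → Y` be a homotopy from `f₀` to `f₁`. The maps
`P = F(H × id) : F(Y × [0,1]ⁿ) → F(X × [0,1]ⁿ⁺¹)`, with the homotopy parameter as the first cube
coordinate, form a chain homotopy: restricting `H × id` to the faces `t = 0, 1` of the first
coordinate gives `f₀ × id` and `f₁ × id`, while restricting it to a face of a later coordinate is
the same as first taking the corresponding face in `Y × [0,1]ⁿ`. Since the first coordinate carries
the sign `-1` and shifting the others flips their sign, `d P + P d = F(f₁ × id) - F(f₀ × id)`.
-/

open CategoryTheory Opposite

namespace Stmt8

/-- The topological `n`-cube `[0,1]ⁿ`. -/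
abbrev Cube (n : ℕ) : Type := Fin n → unitInterval

/-- The object `X × [0,1]ⁿ` of `TopCat`. -/
def cubeObj (X : TopCat) (n : ℕ) : TopCat := TopCat.of (↥X × Cube n)

/-- The face map `id_X × δ_{i,ε} : X × [0,1]ⁿ → X × [0,1]ⁿ⁺¹` inserting the constant `ε` as
the `i`-th cube coordinate. -/
def face (X : TopCat) (n : ℕ) (i : Fin (n + 1)) (ε : unitInterval) :
    cubeObj X n ⟶ cubeObj X (n + 1) :=
  TopCat.ofHom ⟨fun p => (p.1, (i.insertNth ε p.2 : Cube (n + 1))),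
    (continuous_fst.prodMk ((Continuous.finInsertNth i continuous_const
      continuous_id).comp continuous_snd))⟩

/-- The map `f × id_{[0,1]ⁿ}` induced by a continuous map `f : X → Y`. -/
def cubeMap {X Y : TopCat} (f : C(X, Y)) (n : ℕ) : cubeObj X n ⟶ cubeObj Y n :=
  TopCat.ofHom ⟨fun p => (f p.1, p.2), ((f.continuous.comp continuous_fst).prodMk continuous_snd)⟩

variable (F : TopCatᵒᵖ ⥤ AddCommGrpCat)

/-- The `n`-th term `F(X × [0,1]ⁿ)` of the cubical complex `sing_𝕀 F (X)`. -/
abbrev ob (X : TopCat) (n : ℕ) : Type _ := F.obj (op (cubeObj X n))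

/-- The differential of the cubical complex `sing_𝕀 F (X)`:
`Σ_{i=1}^{n+1} (−1)ⁱ (F(id × δ_{i,0}) − F(id × δ_{i,1}))`. -/
def diff (X : TopCat) (n : ℕ) : ob F X (n + 1) →+ ob F X n :=
  ∑ i : Fin (n + 1),
    ((-1 : ℤ) ^ ((i : ℕ) + 1)) •
      (((F.map (face X n i 0).op).hom : ob F X (n + 1) →+ ob F X n) -
       ((F.map (face X n i 1).op).hom : ob F X (n + 1) →+ ob F X n))

/-- The chain map `sing_𝕀 F (f) : sing_𝕀 F (Y) → sing_𝕀 F (X)` induced by a continuous map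
`f : X → Y`, given in degree `n` by `F(f × id_{[0,1]ⁿ})`. -/
def indMap {X Y : TopCat} (f : C(X, Y)) (n : ℕ) : ob F Y n →+ ob F X n :=
  ((F.map (cubeMap f n).op).hom : ob F Y n →+ ob F X n)

end Stmt8

open unitInterval

namespace Stmt8

variable {X Y : TopCat} {f₀ f₁ : C(X, Y)}

def homotopyCubeMap (H : ContinuousMap.Homotopy f₀ f₁) (n : ℕ) :
    cubeObj X (n + 1) ⟶ cubeObj Y n :=
  TopCat.ofHom ⟨fun p => (H (p.2 0, p.1), Fin.tail p.2), by fun_prop⟩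

theorem face_zero_comp_homotopyCubeMap (H : ContinuousMap.Homotopy f₀ f₁) (n : ℕ) (ε : I) :
    face X n 0 ε ≫ homotopyCubeMap H n = cubeMap (H.curry ε) n := by
  ext ⟨x, c⟩
  change (H ((Fin.insertNth 0 ε c : Cube (n + 1)) 0, x),
      Fin.tail (Fin.insertNth 0 ε c : Cube (n + 1))) = (H (ε, x), c)
  simp [Fin.insertNth_zero']

theorem face_succ_comp_homotopyCubeMap (H : ContinuousMap.Homotopy f₀ f₁) (n : ℕ)
    (j : Fin (n + 1)) (ε : I) :
    face X (n + 1) j.succ ε ≫ homotopyCubeMap H (n + 1) = homotopyCubeMap H n ≫ face Y n j ε := by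
  ext ⟨x, c⟩
  change (H ((Fin.insertNth j.succ ε c : Cube (n + 2)) 0, x),
      Fin.tail (Fin.insertNth j.succ ε c : Cube (n + 2))) =
    (H (c 0, x), (Fin.insertNth j ε (Fin.tail c) : Cube (n + 1)))
  conv_lhs => rw [← Fin.cons_self_tail c, Fin.insertNth_succ_cons]
  simp

variable (F : TopCatᵒᵖ ⥤ AddCommGrpCat)

theorem diff_apply (Z : TopCat) (n : ℕ) (z : ob F Z (n + 1)) :
    diff F Z n z = ∑ i : Fin (n + 1), (-1 : ℤ) ^ ((i : ℕ) + 1) •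
      (F.map (face Z n i 0).op z - F.map (face Z n i 1).op z) := by
  simp [diff]

def chainHomotopy (H : ContinuousMap.Homotopy f₀ f₁) (n : ℕ) : ob F Y n →+ ob F X (n + 1) :=
  (F.map (homotopyCubeMap H n).op).hom

theorem map_face_zero_chainHomotopy (H : ContinuousMap.Homotopy f₀ f₁) (n : ℕ) (ε : I)
    (x : ob F Y n) :
    F.map (face X n 0 ε).op (chainHomotopy F H n x) = indMap F (H.curry ε) n x := by
  rw [chainHomotopy, indMap, ← face_zero_comp_homotopyCubeMap, op_comp, Functor.map_comp_apply]

theorem map_face_succ_chainHomotopy (H : ContinuousMap.Homotopy f₀ f₁) (n : ℕ)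
    (j : Fin (n + 1)) (ε : I) (x : ob F Y (n + 1)) :
    F.map (face X (n + 1) j.succ ε).op (chainHomotopy F H (n + 1) x) =
      chainHomotopy F H n (F.map (face Y n j ε).op x) := by
  simp only [chainHomotopy]
  rw [← Functor.map_comp_apply, ← Functor.map_comp_apply, ← op_comp, ← op_comp,
    face_succ_comp_homotopyCubeMap]

theorem diff_chainHomotopy_zero (H : ContinuousMap.Homotopy f₀ f₁) (x : ob F Y 0) :
    diff F X 0 (chainHomotopy F H 0 x) = indMap F f₁ 0 x - indMap F f₀ 0 x := by
  simp [diff_apply, map_face_zero_chainHomotopy]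

theorem diff_chainHomotopy_succ (H : ContinuousMap.Homotopy f₀ f₁) (n : ℕ)
    (x : ob F Y (n + 1)) :
    diff F X (n + 1) (chainHomotopy F H (n + 1) x) + chainHomotopy F H n (diff F Y n x) =
      indMap F f₁ (n + 1) x - indMap F f₀ (n + 1) x := by
  rw [diff_apply, Fin.sum_univ_succ, diff_apply, map_sum]
  simp [map_face_zero_chainHomotopy, map_face_succ_chainHomotopy, pow_succ]

end Stmt8

open Stmt8 in
/-- Homotopic maps induce the same map on the homology of the cubical complex of any
presheaf of abelian groups on `Top`: for every cycle `x` of `sing_𝕀 F (Y)`, the difference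
`sing_𝕀 F (f₀)(x) - sing_𝕀 F (f₁)(x)` is a boundary of `sing_𝕀 F (X)` (in degree `0` every
element is a cycle). -/
theorem stmt8 (F : TopCatᵒᵖ ⥤ AddCommGrpCat) (X Y : TopCat) (f₀ f₁ : C(X, Y))
    (h : f₀.Homotopic f₁) :
    (∀ x : ob F Y 0, ∃ y : ob F X 1,
        diff F X 0 y = indMap F f₀ 0 x - indMap F f₁ 0 x) ∧
    (∀ (n : ℕ) (x : ob F Y (n + 1)), diff F Y n x = 0 →
        ∃ y : ob F X (n + 2),
          diff F X (n + 1) y = indMap F f₀ (n + 1) x - indMap F f₁ (n + 1) x) := by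
  obtain ⟨H⟩ := h
  refine ⟨fun x => ⟨-chainHomotopy F H 0 x, ?_⟩,
    fun n x hx => ⟨-chainHomotopy F H (n + 1) x, ?_⟩⟩
  · rw [map_neg, diff_chainHomotopy_zero, neg_sub]
  · have hP := diff_chainHomotopy_succ F H n x
    rw [hx, map_zero, add_zero] at hP
    rw [map_neg, hP, neg_sub]
end

section
/- Let F be a presheaf of abelian groups on the category of topological spaces (a contravariant functor from Top to abelian groups). If f : X → Y is a homotopy equivalence of topological spaces, then the induced chain map sing_𝕀F(f) : sing_𝕀F(Y) → sing_𝕀F(X), given in degree n by F(f × id_{[0,1]ⁿ}), is a quasi-isomorphism of chain complexes of abelian groups. -/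
open CategoryTheory Opposite

namespace Stmt9

/-- The topological `n`-cube `[0,1]ⁿ`. -/
abbrev Cube (n : ℕ) : Type := Fin n → unitInterval

/-- The object `X × [0,1]ⁿ` of `TopCat`. -/
def cubeObj (X : TopCat) (n : ℕ) : TopCat := TopCat.of (↥X × Cube n)

/-- The face map `id_X × δ_{i,ε} : X × [0,1]ⁿ → X × [0,1]ⁿ⁺¹` inserting the constant `ε` as
the `i`-th cube coordinate. -/
def face (X : TopCat) (n : ℕ) (i : Fin (n + 1)) (ε : unitInterval) :
    cubeObj X n ⟶ cubeObj X (n + 1) :=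
  TopCat.ofHom ⟨fun p => (p.1, (i.insertNth ε p.2 : Cube (n + 1))),
    (continuous_fst.prodMk ((Continuous.finInsertNth i continuous_const
      continuous_id).comp continuous_snd))⟩

/-- The map `f × id_{[0,1]ⁿ}` induced by a continuous map `f : X → Y`. -/
def cubeMap {X Y : TopCat} (f : C(X, Y)) (n : ℕ) : cubeObj X n ⟶ cubeObj Y n :=
  TopCat.ofHom ⟨fun p => (f p.1, p.2), ((f.continuous.comp continuous_fst).prodMk continuous_snd)⟩

variable (F : TopCatᵒᵖ ⥤ AddCommGrpCat)

/-- The `n`-th term `F(X × [0,1]ⁿ)` of the cubical complex `sing_𝕀 F (X)`. -/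
abbrev ob (X : TopCat) (n : ℕ) : Type _ := F.obj (op (cubeObj X n))

/-- The differential of the cubical complex `sing_𝕀 F (X)`:
`Σ_{i=1}^{n+1} (−1)ⁱ (F(id × δ_{i,0}) − F(id × δ_{i,1}))`. -/
def diff (X : TopCat) (n : ℕ) : ob F X (n + 1) →+ ob F X n :=
  ∑ i : Fin (n + 1),
    ((-1 : ℤ) ^ ((i : ℕ) + 1)) •
      (((F.map (face X n i 0).op).hom : ob F X (n + 1) →+ ob F X n) -
       ((F.map (face X n i 1).op).hom : ob F X (n + 1) →+ ob F X n))

/-- The chain map `sing_𝕀 F (f) : sing_𝕀 F (Y) → sing_𝕀 F (X)` induced by a continuous map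
`f : X → Y`, given in degree `n` by `F(f × id_{[0,1]ⁿ})`. -/
def indMap {X Y : TopCat} (f : C(X, Y)) (n : ℕ) : ob F Y n →+ ob F X n :=
  ((F.map (cubeMap f n).op).hom : ob F Y n →+ ob F X n)

/-- Cycles of the cubical complex: every element in degree `0`, kernel of the differential
in positive degrees. -/
def IsCycle (X : TopCat) : ∀ n : ℕ, ob F X n → Prop
  | 0, _ => True
  | n + 1, x => diff F X n x = 0

/-- Boundaries of the cubical complex. -/
def IsBoundary (X : TopCat) (n : ℕ) (x : ob F X n) : Prop :=
  ∃ y : ob F X (n + 1), diff F X n y = x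

/-!
A homotopy `H : f₀ ≃ f₁` gives maps `X × [0,1]ⁿ⁺¹ → Y × [0,1]ⁿ`, `(x, t, s) ↦ (H (t, x), s)`,
and pulling back along them is a chain homotopy `h` between `sing_𝕀F(f₀)` and `sing_𝕀F(f₁)`:
the two faces in the homotopy direction give `f₀ × id` and `f₁ × id`, and every other face
commutes with the prism up to a shift of the index, hence of the sign, so `dh + hd = f₁^* - f₀^*`.
Thus homotopic maps agree on homology, and a homotopy inverse `g` of `f` makes `sing_𝕀F(g)` an
inverse of `sing_𝕀F(f)` on homology.
-/

lemma map_op_hom_map_op_hom {P Q R : TopCat} (u : P ⟶ Q) (v : Q ⟶ R) (x : F.obj (op R)) :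
    (F.map u.op).hom ((F.map v.op).hom x) = (F.map (u ≫ v).op).hom x := by
  rw [op_comp, F.map_comp]
  rfl

lemma diff_apply (X : TopCat) (n : ℕ) (x : ob F X (n + 1)) :
    diff F X n x = ∑ i : Fin (n + 1), ((-1 : ℤ) ^ ((i : ℕ) + 1)) •
      ((F.map (face X n i 0).op).hom x - (F.map (face X n i 1).op).hom x) := by
  simp [diff]

section Naturality

variable {X Y Z : TopCat}

lemma cubeMap_id (n : ℕ) : cubeMap (ContinuousMap.id X) n = 𝟙 (cubeObj X n) := rfl

lemma cubeMap_comp (f : C(X, Y)) (g : C(Y, Z)) (n : ℕ) :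
    cubeMap f n ≫ cubeMap g n = cubeMap (g.comp f) n := rfl

lemma face_comp_cubeMap (f : C(X, Y)) (n : ℕ) (i : Fin (n + 1)) (ε : unitInterval) :
    face X n i ε ≫ cubeMap f (n + 1) = cubeMap f n ≫ face Y n i ε := rfl

lemma indMap_id (n : ℕ) (x : ob F X n) : indMap F (ContinuousMap.id X) n x = x := by
  simp [indMap, cubeMap_id]

lemma indMap_comp (f : C(X, Y)) (g : C(Y, Z)) (n : ℕ) (x : ob F Z n) :
    indMap F (g.comp f) n x = indMap F f n (indMap F g n x) := by
  simp only [indMap, map_op_hom_map_op_hom, cubeMap_comp]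

lemma diff_indMap (f : C(X, Y)) (n : ℕ) (x : ob F Y (n + 1)) :
    diff F X n (indMap F f (n + 1) x) = indMap F f n (diff F Y n x) := by
  simp only [diff_apply, indMap, map_sum, map_zsmul, map_sub, map_op_hom_map_op_hom,
    face_comp_cubeMap]

lemma diff_comp_indMap (f : C(X, Y)) (n : ℕ) :
    (diff F X n).comp (indMap F f (n + 1)) = (indMap F f n).comp (diff F Y n) :=
  AddMonoidHom.ext (diff_indMap F f n)

end Naturality

section Prism

variable {X Y : TopCat} {f₀ f₁ : C(X, Y)}

def prism (H : f₀.Homotopy f₁) (n : ℕ) : cubeObj X (n + 1) ⟶ cubeObj Y n :=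
  TopCat.ofHom ⟨fun p => (H (p.2 0, p.1), Fin.tail p.2),
    (H.continuous.comp (((continuous_apply 0).comp continuous_snd).prodMk continuous_fst)).prodMk
      (continuous_pi fun i => (continuous_apply i.succ).comp continuous_snd)⟩

lemma face_zero_comp_prism (H : f₀.Homotopy f₁) (n : ℕ) (ε : unitInterval) :
    face X n 0 ε ≫ prism H n = cubeMap (H.curry ε) n :=
  TopCat.ext fun p => Prod.ext rfl <| by
    change Fin.tail (Fin.insertNth 0 ε p.2 : Cube (n + 1)) = p.2
    rw [Fin.insertNth_zero', Fin.tail_cons]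

lemma face_succ_comp_prism (H : f₀.Homotopy f₁) (n : ℕ) (j : Fin (n + 1)) (ε : unitInterval) :
    face X (n + 1) j.succ ε ≫ prism H (n + 1) = prism H n ≫ face Y n j ε := by
  refine TopCat.ext fun p => Prod.ext rfl ?_
  change Fin.tail (Fin.insertNth j.succ ε p.2 : Cube (n + 2)) =
    (Fin.insertNth j ε (Fin.tail p.2) : Cube (n + 1))
  rw [← Fin.cons_self_tail p.2, Fin.insertNth_succ_cons, Fin.tail_cons, Fin.tail_cons]

end Prism

section ChainHomotopy

variable {X Y : TopCat} {f₀ f₁ : C(X, Y)}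

def prismHom (H : f₀.Homotopy f₁) (n : ℕ) : ob F Y n →+ ob F X (n + 1) :=
  (F.map (prism H n).op).hom

lemma face_zero_prismHom (H : f₀.Homotopy f₁) (n : ℕ) (ε : unitInterval) (y : ob F Y n) :
    (F.map (face X n 0 ε).op).hom (prismHom F H n y) = indMap F (H.curry ε) n y := by
  rw [prismHom, map_op_hom_map_op_hom, face_zero_comp_prism, indMap]

lemma face_succ_prismHom (H : f₀.Homotopy f₁) (n : ℕ) (j : Fin (n + 1)) (ε : unitInterval)
    (y : ob F Y (n + 1)) :
    (F.map (face X (n + 1) j.succ ε).op).hom (prismHom F H (n + 1) y) =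
      prismHom F H n ((F.map (face Y n j ε).op).hom y) := by
  simp only [prismHom, map_op_hom_map_op_hom, face_succ_comp_prism]

lemma diff_prismHom_zero (H : f₀.Homotopy f₁) (y : ob F Y 0) :
    diff F X 0 (prismHom F H 0 y) = indMap F f₁ 0 y - indMap F f₀ 0 y := by
  simp [diff_apply, face_zero_prismHom]

lemma diff_prismHom_succ (H : f₀.Homotopy f₁) (n : ℕ) (y : ob F Y (n + 1)) :
    diff F X (n + 1) (prismHom F H (n + 1) y) =
      indMap F f₁ (n + 1) y - indMap F f₀ (n + 1) y - prismHom F H n (diff F Y n y) := by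
  rw [diff_apply, Fin.sum_univ_succ, diff_apply, map_sum]
  simp [face_zero_prismHom, face_succ_prismHom, pow_succ]

lemma diff_prismHom_of_isCycle (H : f₀.Homotopy f₁) :
    ∀ (n : ℕ) (y : ob F Y n), IsCycle F Y n y →
      diff F X n (prismHom F H n y) = indMap F f₁ n y - indMap F f₀ n y
  | 0, y, _ => diff_prismHom_zero F H y
  | n + 1, y, hy => by rw [diff_prismHom_succ, show diff F Y n y = 0 from hy, map_zero, sub_zero]

end ChainHomotopy

variable {X Y : TopCat}

lemma IsCycle.indMap (f : C(X, Y)) : ∀ {n : ℕ} {y : ob F Y n}, IsCycle F Y n y →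
    IsCycle F X n (indMap F f n y)
  | 0, _, _ => trivial
  | n + 1, y, hy => by
    rw [IsCycle, diff_indMap, show diff F Y n y = 0 from hy, map_zero]

lemma IsBoundary.indMap (f : C(X, Y)) {n : ℕ} {y : ob F Y n} (hy : IsBoundary F Y n y) :
    IsBoundary F X n (indMap F f n y) := by
  obtain ⟨z, rfl⟩ := hy
  exact ⟨_, diff_indMap F f n z⟩

lemma IsBoundary.add {n : ℕ} {x x' : ob F X n} (hx : IsBoundary F X n x)
    (hx' : IsBoundary F X n x') : IsBoundary F X n (x + x') := by
  obtain ⟨z, rfl⟩ := hx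
  obtain ⟨z', rfl⟩ := hx'
  exact ⟨z + z', map_add _ z z'⟩

lemma isBoundary_indMap_sub_indMap {f₀ f₁ : C(X, Y)} (h : f₀.Homotopic f₁) {n : ℕ}
    {y : ob F Y n} (hy : IsCycle F Y n y) :
    IsBoundary F X n (indMap F f₁ n y - indMap F f₀ n y) :=
  let ⟨H⟩ := h
  ⟨prismHom F H n y, diff_prismHom_of_isCycle F H n y hy⟩

end Stmt9

open Stmt9 in
/-- If `f : X → Y` is a homotopy equivalence of topological spaces, then for any presheaf of
abelian groups `F` on `Top` the induced chain map `sing_𝕀 F (f) : sing_𝕀 F (Y) → sing_𝕀 F (X)`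
is a quasi-isomorphism: it is a chain map, and it induces a bijection on homology in every
degree (surjectivity: every cycle of `sing_𝕀 F (X)` agrees with the image of a cycle of
`sing_𝕀 F (Y)` up to a boundary; injectivity: a cycle of `sing_𝕀 F (Y)` whose image is a
boundary is itself a boundary). -/
theorem stmt9 (F : TopCatᵒᵖ ⥤ AddCommGrpCat) (X Y : TopCat) (f : C(X, Y))
    (hf : ∃ g : C(Y, X),
      (g.comp f).Homotopic (ContinuousMap.id X) ∧ (f.comp g).Homotopic (ContinuousMap.id Y)) :
    (∀ n : ℕ, (diff F X n).comp (indMap F f (n + 1)) = (indMap F f n).comp (diff F Y n)) ∧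
    (∀ (n : ℕ) (x : ob F X n), IsCycle F X n x →
        ∃ y : ob F Y n, IsCycle F Y n y ∧ IsBoundary F X n (x - indMap F f n y)) ∧
    (∀ (n : ℕ) (y : ob F Y n), IsCycle F Y n y → IsBoundary F X n (indMap F f n y) →
        IsBoundary F Y n y) := by
  obtain ⟨g, hgf, hfg⟩ := hf
  refine ⟨diff_comp_indMap F f, fun n x hx => ⟨indMap F g n x, hx.indMap F g, ?_⟩,
    fun n y hy hfy => ?_⟩
  · simpa only [indMap_id, indMap_comp] using isBoundary_indMap_sub_indMap F hgf hx
  · have hy' : IsBoundary F Y n (y - indMap F g n (indMap F f n y)) := by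
      simpa only [indMap_id, indMap_comp] using isBoundary_indMap_sub_indMap F hfg hy
    simpa only [sub_add_cancel] using hy'.add F (hfy.indMap F g)
end

section
/- Let S be a topological space and F a presheaf of abelian groups on the category of topological spaces over S (a contravariant functor from the over-category Top/S to abelian groups). Let (X, h_X) and (Y, h_Y) be spaces over S (h_X : X → S, h_Y : Y → S continuous), and regard X × [0,1]ⁿ as a space over S via h_X composed with the projection, and similarly for Y. Let f₀, f₁ : X → Y be continuous maps over S (h_Y ∘ f_i = h_X) which are homotopic over S, i.e., there exists a continuous h : X × [0,1] → Y with h_Y ∘ h = h_X ∘ pr_X, f₀ = h(·,0) and f₁ = h(·,1). Then the chain maps from the cubical complex (n ↦ F(Y × [0,1]ⁿ over S)) to the cubical complex (n ↦ F(X × [0,1]ⁿ over S)) induced by f₀ × id and f₁ × id induce the same map on homology in every degree; consequently, if f : X → Y is a homotopy equivalence over S, the induced chain map is a quasi-isomorphism. -/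
/-!
A homotopy `h` over `S` from `f₀` to `f₁` gives prisms `X × [0,1]ⁿ⁺¹ → Y × [0,1]ⁿ`,
`(x, t, u) ↦ (h (x, t), u)`, over `S`. Pulling back along them is a chain homotopy between the
maps induced by `f₀` and `f₁`: the two faces in the coordinate `t` recover `f₀ × id` and
`f₁ × id`, while every other face commutes with the prism after shifting its index by one, which
flips its sign. For a homotopy equivalence `f` with inverse `g`, functoriality then makes `g`
induce an inverse of `f` on homology.
-/

open CategoryTheory Opposite

namespace Stmt10

/-- The topological `n`-cube `[0,1]ⁿ`. -/
abbrev Cube (n : ℕ) : Type := Fin n → unitInterval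

variable (S : TopCat)

/-- The object `X × [0,1]ⁿ` of `TopCat`. -/
def cubeTop (X : TopCat) (n : ℕ) : TopCat := TopCat.of (↥X × Cube n)

/-- The projection `X × [0,1]ⁿ → X`. -/
def cubeProj (X : TopCat) (n : ℕ) : cubeTop X n ⟶ X := TopCat.ofHom ⟨Prod.fst, continuous_fst⟩

/-- `X × [0,1]ⁿ` as a space over `S`, via `h_X` composed with the projection. -/
def cubeOver {X : TopCat} (hX : X ⟶ S) (n : ℕ) : Over S :=
  Over.mk (cubeProj X n ≫ hX)

/-- The face map `id_X × δ_{i,ε} : X × [0,1]ⁿ → X × [0,1]ⁿ⁺¹` (inserting the constant `ε`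
as the `i`-th cube coordinate), as a morphism over `S`. -/
def face {X : TopCat} (hX : X ⟶ S) (n : ℕ) (i : Fin (n + 1)) (ε : unitInterval) :
    cubeOver S hX n ⟶ cubeOver S hX (n + 1) :=
  Over.homMk
    (TopCat.ofHom ⟨fun p => (p.1, (i.insertNth ε p.2 : Cube (n + 1))),
      (continuous_fst.prodMk ((Continuous.finInsertNth i continuous_const
        continuous_id).comp continuous_snd))⟩)
    rfl

/-- The map `f × id_{[0,1]ⁿ}` induced by a continuous map `f : X → Y` over `S`, as a
morphism over `S`. -/
def cubeMap {X Y : TopCat} (hX : X ⟶ S) (hY : Y ⟶ S) (f : C(X, Y))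
    (hf : ∀ x, hY (f x) = hX x) (n : ℕ) :
    cubeOver S hX n ⟶ cubeOver S hY n :=
  Over.homMk
    (TopCat.ofHom ⟨fun p => (f p.1, p.2), ((f.continuous.comp continuous_fst).prodMk continuous_snd)⟩)
    (by ext p; exact hf p.1)

variable (F : (Over S)ᵒᵖ ⥤ AddCommGrpCat)

/-- The `n`-th term `F(X × [0,1]ⁿ / S)` of the relative cubical complex. -/
abbrev ob {X : TopCat} (hX : X ⟶ S) (n : ℕ) : Type _ := F.obj (op (cubeOver S hX n))

/-- The differential of the relative cubical complex:
`Σ_{i=1}^{n+1} (−1)ⁱ (F(id × δ_{i,0}) − F(id × δ_{i,1}))`. -/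
def diff {X : TopCat} (hX : X ⟶ S) (n : ℕ) : ob S F hX (n + 1) →+ ob S F hX n :=
  ∑ i : Fin (n + 1),
    ((-1 : ℤ) ^ ((i : ℕ) + 1)) •
      (((F.map (face S hX n i 0).op).hom : ob S F hX (n + 1) →+ ob S F hX n) -
       ((F.map (face S hX n i 1).op).hom : ob S F hX (n + 1) →+ ob S F hX n))

/-- The chain map induced by a continuous map `f : X → Y` over `S`, given in degree `n` by
`F(f × id_{[0,1]ⁿ})`. -/
def indMap {X Y : TopCat} (hX : X ⟶ S) (hY : Y ⟶ S) (f : C(X, Y))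
    (hf : ∀ x, hY (f x) = hX x) (n : ℕ) : ob S F hY n →+ ob S F hX n :=
  ((F.map (cubeMap S hX hY f hf n).op).hom : ob S F hY n →+ ob S F hX n)

/-- Two continuous maps `u v : A → B` over `S` are homotopic over `S` if there is a homotopy
`h : A × [0,1] → B` from `u` to `v` with `h_B ∘ h = h_A ∘ pr_A`. -/
def HtpOver {A B : TopCat} (hA : A ⟶ S) (hB : B ⟶ S) (u v : C(A, B)) : Prop :=
  ∃ h : C(↥A × unitInterval, B),
    (∀ p : ↥A × unitInterval, hB (h p) = hA p.1) ∧
    (∀ a : ↥A, h (a, 0) = u a) ∧ (∀ a : ↥A, h (a, 1) = v a)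

/-- Cycles of the relative cubical complex. -/
def IsCycle {X : TopCat} (hX : X ⟶ S) : ∀ n : ℕ, ob S F hX n → Prop
  | 0, _ => True
  | n + 1, x => diff S F hX n x = 0

/-- Boundaries of the relative cubical complex. -/
def IsBoundary {X : TopCat} (hX : X ⟶ S) (n : ℕ) (x : ob S F hX n) : Prop :=
  ∃ y : ob S F hX (n + 1), diff S F hX n y = x

end Stmt10

namespace Stmt10

section Cube

variable {α : Type*} {n : ℕ}

lemma tail_insertNth_succ (j : Fin (n + 1)) (ε : α) (u : Fin (n + 1) → α) :
    Fin.tail (Fin.insertNth j.succ ε u : Fin (n + 2) → α) = Fin.insertNth j ε (Fin.tail u) := by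
  rw [← Fin.cons_self_tail u, Fin.insertNth_succ_cons, Fin.tail_cons, Fin.tail_cons]

lemma insertNth_succ_apply_zero (j : Fin (n + 1)) (ε : α) (u : Fin (n + 1) → α) :
    (Fin.insertNth j.succ ε u : Fin (n + 2) → α) 0 = u 0 := by
  rw [← Fin.cons_self_tail u, Fin.insertNth_succ_cons, Fin.cons_zero, Fin.cons_zero]

end Cube

variable (S : TopCat) (F : (Over S)ᵒᵖ ⥤ AddCommGrpCat)

lemma map_op_map_op {A B C : Over S} (a : A ⟶ B) (b : B ⟶ C) (x : F.obj (op C)) :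
    F.map a.op (F.map b.op x) = F.map (a ≫ b).op x := by
  rw [op_comp, F.map_comp, ConcreteCategory.comp_apply]

variable {S F}
variable {A B C : TopCat} {hA : A ⟶ S} {hB : B ⟶ S} {hC : C ⟶ S}

lemma diff_apply (n : ℕ) (x : ob S F hA (n + 1)) :
    diff S F hA n x = ∑ i : Fin (n + 1), ((-1 : ℤ) ^ ((i : ℕ) + 1)) •
      (F.map (face S hA n i 0).op x - F.map (face S hA n i 1).op x) := by
  simp only [diff, AddMonoidHom.finsetSum_apply]
  rfl

lemma face_comp_cubeMap (f : C(A, B)) (hf : ∀ x, hB (f x) = hA x) (n : ℕ) (i : Fin (n + 1))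
    (ε : unitInterval) :
    face S hA n i ε ≫ cubeMap S hA hB f hf (n + 1) = cubeMap S hA hB f hf n ≫ face S hB n i ε :=
  rfl

lemma indMap_indMap (f : C(A, B)) (hf : ∀ x, hB (f x) = hA x) (g : C(B, C))
    (hg : ∀ x, hC (g x) = hB x) (hgf : ∀ x, hC (g.comp f x) = hA x) (n : ℕ) (x : ob S F hC n) :
    indMap S F hA hB f hf n (indMap S F hB hC g hg n x) = indMap S F hA hC (g.comp f) hgf n x :=
  map_op_map_op S F _ _ x

lemma indMap_id (n : ℕ) (x : ob S F hA n) :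
    indMap S F hA hA (ContinuousMap.id A) (fun _ => rfl) n x = x := by
  change F.map (𝟙 (cubeOver S hA n)).op x = x
  rw [op_id, F.map_id, AddCommGrpCat.id_apply]

lemma diff_indMap (f : C(A, B)) (hf : ∀ x, hB (f x) = hA x) (n : ℕ) (x : ob S F hB (n + 1)) :
    diff S F hA n (indMap S F hA hB f hf (n + 1) x) =
      indMap S F hA hB f hf n (diff S F hB n x) := by
  simp only [diff_apply, indMap, map_sum, map_zsmul, map_sub, map_op_map_op, face_comp_cubeMap]

lemma IsCycle.indMap (f : C(A, B)) (hf : ∀ x, hB (f x) = hA x) {n : ℕ} {x : ob S F hB n}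
    (hx : IsCycle S F hB n x) : IsCycle S F hA n (indMap S F hA hB f hf n x) := by
  cases n with
  | zero => trivial
  | succ n =>
    have hx : diff S F hB n x = 0 := hx
    exact (diff_indMap f hf n x).trans (by rw [hx, map_zero])

lemma IsBoundary.indMap (f : C(A, B)) (hf : ∀ x, hB (f x) = hA x) {n : ℕ} {x : ob S F hB n}
    (hx : IsBoundary S F hB n x) : IsBoundary S F hA n (indMap S F hA hB f hf n x) := by
  obtain ⟨y, rfl⟩ := hx
  exact ⟨_, diff_indMap f hf n y⟩

lemma IsBoundary.add {n : ℕ} {x y : ob S F hA n} (hx : IsBoundary S F hA n x)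
    (hy : IsBoundary S F hA n y) : IsBoundary S F hA n (x + y) := by
  obtain ⟨x', rfl⟩ := hx
  obtain ⟨y', rfl⟩ := hy
  exact ⟨x' + y', map_add _ _ _⟩

section Prism

variable (h : C(A × unitInterval, B)) (hh : ∀ p : A × unitInterval, hB (h p) = hA p.1)

def prism (n : ℕ) : cubeOver S hA (n + 1) ⟶ cubeOver S hB n :=
  Over.homMk
    (TopCat.ofHom ⟨fun p => (h (p.1, p.2 0), Fin.tail p.2),
      (h.continuous.comp (continuous_fst.prodMk ((continuous_apply 0).comp continuous_snd))).prodMk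
        (continuous_pi fun j => (continuous_apply j.succ).comp continuous_snd)⟩)
    (by ext p; exact hh (p.1, p.2 0))

lemma face_zero_comp_prism (n : ℕ) (ε : unitInterval) (e : C(A, B))
    (he : ∀ x, hB (e x) = hA x) (hε : ∀ a, h (a, ε) = e a) :
    face S hA n 0 ε ≫ prism h hh n = cubeMap S hA hB e he n := by
  ext p
  change (h (p.1, (Fin.insertNth 0 ε p.2 : Cube (n + 1)) 0),
    Fin.tail (Fin.insertNth 0 ε p.2 : Cube (n + 1))) = (e p.1, p.2)
  rw [Fin.insertNth_zero', Fin.cons_zero, Fin.tail_cons, hε]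

lemma face_succ_comp_prism (n : ℕ) (j : Fin (n + 1)) (ε : unitInterval) :
    face S hA (n + 1) j.succ ε ≫ prism h hh (n + 1) = prism h hh n ≫ face S hB n j ε := by
  ext p
  change (h (p.1, (Fin.insertNth j.succ ε p.2 : Cube (n + 2)) 0),
    Fin.tail (Fin.insertNth j.succ ε p.2 : Cube (n + 2))) =
    (h (p.1, p.2 0), (Fin.insertNth j ε (Fin.tail p.2) : Cube (n + 1)))
  rw [insertNth_succ_apply_zero, tail_insertNth_succ]

lemma diff_prism_zero {f₀ f₁ : C(A, B)} (h₀ : ∀ x, hB (f₀ x) = hA x)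
    (h₁ : ∀ x, hB (f₁ x) = hA x) (hh₀ : ∀ a, h (a, 0) = f₀ a) (hh₁ : ∀ a, h (a, 1) = f₁ a)
    (x : ob S F hB 0) :
    diff S F hA 0 (F.map (prism h hh 0).op x) =
      indMap S F hA hB f₁ h₁ 0 x - indMap S F hA hB f₀ h₀ 0 x := by
  rw [diff_apply, Fin.sum_univ_succ, Fin.sum_univ_zero, add_zero, map_op_map_op, map_op_map_op,
    face_zero_comp_prism h hh _ 0 f₀ h₀ hh₀, face_zero_comp_prism h hh _ 1 f₁ h₁ hh₁, Fin.val_zero,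
    zero_add, pow_one, neg_one_zsmul, neg_sub]
  rfl

lemma diff_prism_succ {f₀ f₁ : C(A, B)} (h₀ : ∀ x, hB (f₀ x) = hA x)
    (h₁ : ∀ x, hB (f₁ x) = hA x) (hh₀ : ∀ a, h (a, 0) = f₀ a) (hh₁ : ∀ a, h (a, 1) = f₁ a)
    (n : ℕ) (x : ob S F hB (n + 1)) :
    diff S F hA (n + 1) (F.map (prism h hh (n + 1)).op x) +
        F.map (prism h hh n).op (diff S F hB n x) =
      indMap S F hA hB f₁ h₁ (n + 1) x - indMap S F hA hB f₀ h₀ (n + 1) x := by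
  have face_succ (j : Fin (n + 1)) (ε : unitInterval) :
      F.map (face S hA (n + 1) j.succ ε).op (F.map (prism h hh (n + 1)).op x) =
        F.map (prism h hh n).op (F.map (face S hB n j ε).op x) := by
    rw [map_op_map_op, map_op_map_op, face_succ_comp_prism]
  rw [diff_apply, Fin.sum_univ_succ, map_op_map_op, map_op_map_op,
    face_zero_comp_prism h hh _ 0 f₀ h₀ hh₀, face_zero_comp_prism h hh _ 1 f₁ h₁ hh₁, Fin.val_zero,
    zero_add, pow_one, neg_one_zsmul, neg_sub, diff_apply, map_sum]
  simp only [face_succ, map_zsmul, map_sub, Fin.val_succ, pow_succ _ ((_ : ℕ) + 1), mul_neg_one,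
    neg_smul, Finset.sum_neg_distrib]
  rw [neg_add_cancel_right]
  rfl

end Prism

lemma HtpOver.symm {u v : C(A, B)} (huv : HtpOver S hA hB u v) : HtpOver S hA hB v u := by
  obtain ⟨h, hh, hu, hv⟩ := huv
  exact ⟨h.comp ⟨fun p => (p.1, unitInterval.symm p.2), by fun_prop⟩, fun p => hh _,
    fun a => by simpa using hv a, fun a => by simpa using hu a⟩

theorem isBoundary_indMap_sub_indMap {f₀ f₁ : C(A, B)} (h₀ : ∀ x, hB (f₀ x) = hA x)
    (h₁ : ∀ x, hB (f₁ x) = hA x) (htp : HtpOver S hA hB f₀ f₁) {n : ℕ} {x : ob S F hB n}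
    (hx : IsCycle S F hB n x) :
    IsBoundary S F hA n (indMap S F hA hB f₀ h₀ n x - indMap S F hA hB f₁ h₁ n x) := by
  obtain ⟨h, hh, hh₁, hh₀⟩ := htp.symm
  cases n with
  | zero => exact ⟨_, diff_prism_zero h hh h₁ h₀ hh₁ hh₀ x⟩
  | succ n =>
    have hx : diff S F hB n x = 0 := hx
    refine ⟨F.map (prism h hh (n + 1)).op x, ?_⟩
    rw [← diff_prism_succ h hh h₁ h₀ hh₁ hh₀ n x, hx, map_zero, add_zero]

end Stmt10

open Stmt10 in
/-- Relative homotopy invariance of the cubical complex of a presheaf of abelian groups on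
`Top/S`: maps over `S` which are homotopic over `S` induce the same map on homology of the
relative cubical complexes; consequently a homotopy equivalence over `S` induces a
quasi-isomorphism. -/
theorem stmt10 (S X Y : TopCat) (hX : X ⟶ S) (hY : Y ⟶ S) (F : (Over S)ᵒᵖ ⥤ AddCommGrpCat) :
    -- homotopic maps over S induce the same map on homology
    (∀ (f₀ f₁ : C(X, Y)) (h₀ : ∀ x, hY (f₀ x) = hX x) (h₁ : ∀ x, hY (f₁ x) = hX x),
        HtpOver S hX hY f₀ f₁ →
        ∀ (n : ℕ) (x : ob S F hY n), IsCycle S F hY n x →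
          IsBoundary S F hX n
            (indMap S F hX hY f₀ h₀ n x - indMap S F hX hY f₁ h₁ n x)) ∧
    -- a homotopy equivalence over S induces a quasi-isomorphism
    (∀ (f : C(X, Y)) (hf : ∀ x, hY (f x) = hX x),
        (∃ (g : C(Y, X)) (_ : ∀ y, hX (g y) = hY y),
          HtpOver S hX hX (g.comp f) (ContinuousMap.id X) ∧
          HtpOver S hY hY (f.comp g) (ContinuousMap.id Y)) →
        ((∀ n : ℕ, (diff S F hX n).comp (indMap S F hX hY f hf (n + 1)) =
            (indMap S F hX hY f hf n).comp (diff S F hY n)) ∧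
         (∀ (n : ℕ) (x : ob S F hX n), IsCycle S F hX n x →
            ∃ y : ob S F hY n, IsCycle S F hY n y ∧
              IsBoundary S F hX n (x - indMap S F hX hY f hf n y)) ∧
         (∀ (n : ℕ) (y : ob S F hY n), IsCycle S F hY n y →
            IsBoundary S F hX n (indMap S F hX hY f hf n y) → IsBoundary S F hY n y))) := by
  refine ⟨fun f₀ f₁ h₀ h₁ htp n x hx => isBoundary_indMap_sub_indMap h₀ h₁ htp hx, ?_⟩
  rintro f hf ⟨g, hg, hgf, hfg⟩
  have hgfX : ∀ x, hX (g.comp f x) = hX x := fun x => (hg (f x)).trans (hf x)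
  have hfgY : ∀ y, hY (f.comp g y) = hY y := fun y => (hf (g y)).trans (hg y)
  refine ⟨fun n => AddMonoidHom.ext (diff_indMap f hf n), fun n x hx => ?_, fun n y hy hfy => ?_⟩
  · refine ⟨indMap S F hY hX g hg n x, hx.indMap g hg, ?_⟩
    have := isBoundary_indMap_sub_indMap (F := F) (fun _ => rfl) hgfX hgf.symm hx
    rwa [indMap_id, ← indMap_indMap f hf g hg hgfX] at this
  · have := (hfy.indMap g hg).add
      (isBoundary_indMap_sub_indMap (F := F) (fun _ => rfl) hfgY hfg.symm hy)
    rwa [indMap_indMap g hg f hf hfgY, indMap_id, add_sub_cancel] at this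
end
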